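/- Let x ∈ I have continued fraction coefficients (a_j)_{j≥1}, let n ≥ 2 be even with Σ_{j=1}^n log a_j > 0, and let y ∈ I_n(x) \ I_{n+1}(x). Then ( (1/n) Σ_{j=1}^{⌈n/2⌉} log a_{2j-1} ) / ( (1/n) Σ_{j=1}^{n+3} log(a_j+1) + C_1(n)/n ) ≤ log|f_1(x)−f_1(y)| / log|x−y| ≤ ( (1/n) Σ_{j=1}^{⌈n/2⌉+3} log(a_{2j-1}+1) + C_2(n)/(2n) ) / ( (1/n) Σ_{j=1}^n log a_j ), where C_1(n) = (log 2)/2 + log max( (a_{n+2}+2)/(a_{n+2}+1), (a_{n+3}+2)/(a_{n+3}+1) ) and C_2(n) = (log 2)/2 + log max( (a_{2⌈n/2⌉+3}+2)/(a_{2⌈n/2⌉+3}+1), (a_{2⌈n/2⌉+5}+2)/(a_{2⌈n/2⌉+5}+1) ). -/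

import Mathlib

open Filter Finset MeasureTheory

/-- `qden a n` is the denominator `q_n` of the continued fraction with partial
quotients `a_1 = a 0, a_2 = a 1, …` (0-indexed sequence `a`), defined by
`q_0 = 1`, `q_1 = a_1`, `q_n = a_n q_{n-1} + q_{n-2}`. -/
def qden (a : ℕ → ℕ+) : ℕ → ℕ
  | 0 => 1
  | 1 => a 0
  | (n+2) => (a (n+1) : ℕ) * qden a (n+1) + qden a n

/-- `pnum a n` is the numerator `p_n`, defined by `p_0 = 0`, `p_1 = 1`,
`p_n = a_n p_{n-1} + p_{n-2}`. -/
def pnum (a : ℕ → ℕ+) : ℕ → ℕ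
  | 0 => 0
  | 1 => 1
  | (n+2) => (a (n+1) : ℕ) * pnum a (n+1) + pnum a n

/-- The value `[a_1, a_2, …]` of the infinite continued fraction with partial quotients
`a_1 = a 0, a_2 = a 1, …`, i.e. the limit of the convergents `p_n / q_n` (which always
exists). -/
noncomputable def cfVal (a : ℕ → ℕ+) : ℝ :=
  limUnder atTop (fun n => (pnum a n : ℝ) / (qden a n : ℝ))

/-- The set `I` of irrational numbers of `[0,1]`. -/
def Iirr : Set ℝ := {x | x ∈ Set.Icc (0:ℝ) 1 ∧ Irrational x}

/-- The fundamental interval `I_n(x)` of rank `n` for `x = [a_1, a_2, …]`: the set of those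
irrationals `y = [b_1, b_2, …]` whose first `n` partial quotients agree with those of `x`. -/
def fundInt (a : ℕ → ℕ+) (n : ℕ) : Set ℝ :=
  {y | ∃ b : ℕ → ℕ+, cfVal b = y ∧ ∀ j < n, b j = a j}

/-- The (unique) sequence of partial quotients of `x`, when `x` has a continued
fraction expansion. -/
noncomputable def coeff (x : ℝ) : ℕ → ℕ+ := by
  classical
  exact if h : ∃ a : ℕ → ℕ+, cfVal a = x then h.choose else fun _ => 1

/-- First component of Cantor's bijection: `f₁([a_1,a_2,…]) = [a_1,a_3,a_5,…]`. -/
noncomputable def cantorF1 (x : ℝ) : ℝ := cfVal (fun j => coeff x (2*j))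

/-- Second component of Cantor's bijection: `f₂([a_1,a_2,…]) = [a_2,a_4,a_6,…]`. -/
noncomputable def cantorF2 (x : ℝ) : ℝ := cfVal (fun j => coeff x (2*j+1))

/-!
For `x = [a_1, a_2, …]`, the rank-`(k+1)` fundamental interval is the interval between
`[a_1, …, a_{k+1}, 1] = (p_{k+1} + p_k)/(q_{k+1} + q_k)` and `p_{k+1}/q_{k+1}`, of length at most
`1/q_{k+1}^2`. If `y` leaves it at rank `k + 2`, then `x` and `y` lie in different rank-`(k+2)`
intervals, and the alternation of the convergents keeps `x` at distance at least
`1/(2 q_{k+3} q_{k+4})` from the ends of its own. With `∏ a_j ≤ q_k ≤ ∏ (a_j + 1)` this pins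
`log |x - y|` between `-2 ∑_{j ≤ n+3} log (a_j + 1)` and `-2 ∑_{j ≤ n} log a_j` when the expansions
first differ at rank `n + 1`. For even `n`, those of `f₁ x` and `f₁ y` first differ at rank
`n/2 + 1`, so the same bounds hold for `log |f₁ x - f₁ y|` with the odd-indexed partial quotients;
dividing gives the ratio bounds even without the nonnegative constants `C₁`, `C₂`.
-/

theorem neg_one_pow_mul_le_abs (k : ℕ) (z : ℝ) : (-1) ^ k * z ≤ |z| :=
  (le_abs_self _).trans_eq (by rw [abs_mul, abs_pow, abs_neg, abs_one, one_pow, one_mul])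

section

variable (a : ℕ → ℕ+)

theorem cast_qden_add_two (k : ℕ) : (qden a (k+2) : ℝ) = a (k+1) * qden a (k+1) + qden a k := by
  simp [qden]

theorem cast_pnum_add_two (k : ℕ) : (pnum a (k+2) : ℝ) = a (k+1) * pnum a (k+1) + pnum a k := by
  simp [pnum]

theorem qden_pos : ∀ k, 0 < qden a k
  | 0 => Nat.one_pos
  | 1 => (a 0).pos
  | k+2 => Nat.add_pos_right _ (qden_pos k)

theorem qden_cast_pos (k : ℕ) : (0 : ℝ) < qden a k := by exact_mod_cast qden_pos a k

theorem qden_le_qden_succ : ∀ k, qden a k ≤ qden a (k+1)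
  | 0 => (a 0).pos
  | k+1 => calc
      qden a (k+1) ≤ a (k+1) * qden a (k+1) := Nat.le_mul_of_pos_left _ (a (k+1)).pos
      _ ≤ qden a (k+2) := Nat.le_add_right _ _

theorem qden_mono : Monotone (qden a) := monotone_nat_of_le_succ (qden_le_qden_succ a)

theorem two_mul_qden_le_qden_add_two (k : ℕ) : 2 * qden a k ≤ qden a (k+2) := by
  have h := Nat.mul_le_mul (a (k+1)).pos (qden_le_qden_succ a k)
  change _ ≤ (a (k+1) : ℕ) * qden a (k+1) + qden a k
  omega

theorem self_le_qden : ∀ k, k ≤ qden a k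
  | 0 => Nat.zero_le _
  | 1 => (a 0).pos
  | k+2 => by
      have := Nat.mul_le_mul (a (k+1)).pos (self_le_qden (k+1))
      have := qden_pos a k
      change _ ≤ (a (k+1) : ℕ) * qden a (k+1) + qden a k
      omega

theorem pnum_mul_qden_sub_qden_mul_pnum : ∀ k,
    (pnum a (k+1) : ℝ) * qden a k - qden a (k+1) * pnum a k = (-1) ^ k
  | 0 => by simp [pnum, qden]
  | k+1 => by
      rw [cast_pnum_add_two, cast_qden_add_two, pow_succ, ← pnum_mul_qden_sub_qden_mul_pnum k]
      ring

theorem prod_le_qden : ∀ k, ∏ j ∈ range k, (a j : ℕ) ≤ qden a k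
  | 0 => le_rfl
  | 1 => by simp [qden]
  | k+2 => by
      rw [prod_range_succ, mul_comm]
      exact (Nat.mul_le_mul_left _ (prod_le_qden (k+1))).trans (Nat.le_add_right _ _)

theorem qden_le_prod : ∀ k, qden a k ≤ ∏ j ∈ range k, ((a j : ℕ) + 1)
  | 0 => le_rfl
  | 1 => by simp [qden]
  | k+2 => by
      rw [prod_range_succ]
      calc qden a (k+2) ≤ (a (k+1) + 1) * qden a (k+1) := by
            change (a (k+1) : ℕ) * qden a (k+1) + qden a k ≤ _
            nlinarith [qden_le_qden_succ a k]
        _ ≤ _ := by rw [mul_comm]; exact Nat.mul_le_mul_right _ (qden_le_prod (k+1))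

theorem two_mul_qden_mul_qden_succ_le (k : ℕ) :
    2 * (qden a k * qden a (k+1)) ≤ (∏ j ∈ range (k+1), ((a j : ℕ) + 1)) ^ 2 := by
  have h₀ := qden_le_prod a k
  have h₁ := qden_le_prod a (k+1)
  have h₂ : 2 * ∏ j ∈ range k, ((a j : ℕ) + 1) ≤ ∏ j ∈ range (k+1), ((a j : ℕ) + 1) := by
    rw [prod_range_succ, mul_comm]
    exact Nat.mul_le_mul_left _ (Nat.succ_le_succ (a k).pos)
  nlinarith

theorem qden_pnum_congr {b : ℕ → ℕ+} :
    ∀ k, (∀ j < k, b j = a j) → qden b k = qden a k ∧ pnum b k = pnum a k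
  | 0, _ => ⟨rfl, rfl⟩
  | 1, h => by simp [qden, pnum, h 0 Nat.one_pos]
  | k+2, h => by
      obtain ⟨hq₁, hp₁⟩ := qden_pnum_congr (k+1) fun j hj => h j (by omega)
      obtain ⟨hq₀, hp₀⟩ := qden_pnum_congr k fun j hj => h j (by omega)
      simp only [qden, pnum, h (k+1) (by omega), hq₁, hp₁, hq₀, hp₀, and_self]

noncomputable def convergent (k : ℕ) : ℝ := pnum a k / qden a k

theorem neg_one_pow_mul_convergent_succ_sub (k : ℕ) :
    (-1) ^ k * (convergent a (k+1) - convergent a k) = 1 / (qden a k * qden a (k+1)) := by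
  have h₀ := qden_cast_pos a k
  have h₁ := qden_cast_pos a (k+1)
  rw [convergent, convergent, div_sub_div _ _ h₁.ne' h₀.ne',
    pnum_mul_qden_sub_qden_mul_pnum, ← mul_div_assoc, ← mul_pow, mul_comm (qden a k : ℝ)]
  norm_num

theorem neg_one_pow_mul_convergent_sub_mem_Icc : ∀ d k,
    (-1) ^ k * (convergent a (k+d) - convergent a k) ∈
      Set.Icc (0 : ℝ) (1 / (qden a k * qden a (k+1)))
  | 0, k => by rw [add_zero, sub_self, mul_zero]; exact ⟨le_rfl, by positivity⟩
  | d+1, k => by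
      obtain ⟨h₁, h₂⟩ := neg_one_pow_mul_convergent_sub_mem_Icc d (k+1)
      have hstep := neg_one_pow_mul_convergent_succ_sub a k
      have hq : 1 / ((qden a (k+1) : ℝ) * qden a (k+2)) ≤ 1 / (qden a k * qden a (k+1)) := by
        have := qden_cast_pos a k
        have := qden_cast_pos a (k+1)
        have : (qden a k : ℝ) ≤ qden a (k+2) := by exact_mod_cast qden_mono a (by omega)
        gcongr 1 / ?_
        nlinarith
      have : (-1) ^ k * (convergent a (k+(d+1)) - convergent a k) =
          (-1) ^ k * (convergent a (k+1) - convergent a k) -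
            (-1) ^ (k+1) * (convergent a (k+1+d) - convergent a (k+1)) := by
        rw [show k + (d+1) = k+1+d by omega]; ring
      rw [this, hstep]
      constructor <;> linarith

theorem abs_convergent_sub_le {k m : ℕ} (h : k ≤ m) :
    |convergent a m - convergent a k| ≤ 1 / (qden a k * qden a (k+1)) := by
  obtain ⟨d, rfl⟩ := Nat.exists_eq_add_of_le h
  obtain ⟨h₀, h₁⟩ := neg_one_pow_mul_convergent_sub_mem_Icc a d k
  rcases neg_one_pow_eq_or ℝ k with hε | hε <;> rw [hε] at h₀ h₁ <;> rw [abs_le] <;>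
    constructor <;> linarith

theorem cauchySeq_convergent : CauchySeq (convergent a) := by
  refine Metric.cauchySeq_iff'.2 fun ε hε => ?_
  obtain ⟨N, hN⟩ := exists_nat_one_div_lt hε
  refine ⟨N, fun m hm => lt_of_le_of_lt ?_ hN⟩
  rw [Real.dist_eq]
  refine (abs_convergent_sub_le a hm).trans ?_
  have h₀ : (1 : ℝ) ≤ qden a N := by exact_mod_cast qden_pos a N
  have h₁ : (N : ℝ) + 1 ≤ qden a (N+1) := by exact_mod_cast self_le_qden a (N+1)
  gcongr 1 / ?_
  nlinarith

theorem tendsto_convergent : Tendsto (convergent a) atTop (nhds (cfVal a)) :=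
  tendsto_nhds_limUnder (cauchySeq_tendsto_of_complete (cauchySeq_convergent a))

theorem neg_one_pow_mul_cfVal_sub_convergent_nonneg (k : ℕ) :
    0 ≤ (-1) ^ k * (cfVal a - convergent a k) := by
  refine ge_of_tendsto (((tendsto_convergent a).sub_const _).const_mul _) ?_
  filter_upwards [eventually_ge_atTop k] with m hm
  obtain ⟨d, rfl⟩ := Nat.exists_eq_add_of_le hm
  exact (neg_one_pow_mul_convergent_sub_mem_Icc a d k).1

theorem one_div_two_mul_le_neg_one_pow_mul_cfVal_sub_convergent (k : ℕ) :
    1 / (2 * (qden a k * qden a (k+1))) ≤ (-1) ^ k * (cfVal a - convergent a k) := by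
  have h₀ := neg_one_pow_mul_convergent_succ_sub a k
  have h₁ := neg_one_pow_mul_convergent_succ_sub a (k+1)
  have h₂ := neg_one_pow_mul_cfVal_sub_convergent_nonneg a (k+2)
  have hq : 1 / ((qden a (k+1) : ℝ) * qden a (k+2)) ≤ 1 / (2 * (qden a k * qden a (k+1))) := by
    have := qden_cast_pos a k
    have := qden_cast_pos a (k+1)
    have : 2 * (qden a k : ℝ) ≤ qden a (k+2) := by
      exact_mod_cast two_mul_qden_le_qden_add_two a k
    gcongr 1 / ?_
    nlinarith
  have hhalf : 1 / ((qden a k : ℝ) * qden a (k+1)) =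
      2 * (1 / (2 * (qden a k * qden a (k+1)))) := by ring
  have : (-1) ^ k * (cfVal a - convergent a k) =
      (-1) ^ k * (convergent a (k+1) - convergent a k) -
        (-1) ^ (k+1) * (convergent a (k+2) - convergent a (k+1)) +
          (-1) ^ (k+2) * (cfVal a - convergent a (k+2)) := by ring
  linarith

/-- The finite continued fraction `[a 0, …, a k, t]`. -/
noncomputable def mobius (k : ℕ) (t : ℝ) : ℝ :=
  (t * pnum a (k+1) + pnum a k) / (t * qden a (k+1) + qden a k)

theorem mobius_partialQuotient_eq_convergent (k : ℕ) :
    mobius a k (a (k+1)) = convergent a (k+2) := by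
  rw [mobius, convergent, cast_pnum_add_two, cast_qden_add_two]

theorem mobius_succ_one (k : ℕ) : mobius a (k+1) 1 = mobius a k (a (k+1) + 1) := by
  rw [mobius, mobius, cast_pnum_add_two, cast_qden_add_two]
  congr 1 <;> ring

theorem mobius_congr {b : ℕ → ℕ+} {k : ℕ} (h : ∀ j < k+1, b j = a j) :
    mobius b k = mobius a k := by
  obtain ⟨hq₁, hp₁⟩ := qden_pnum_congr a (k+1) h
  obtain ⟨hq₀, hp₀⟩ := qden_pnum_congr a k fun j hj => h j (by omega)
  ext t
  rw [mobius, mobius, hq₁, hp₁, hq₀, hp₀]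

theorem convergent_congr {b : ℕ → ℕ+} {k : ℕ} (h : ∀ j < k, b j = a j) :
    convergent b k = convergent a k := by
  obtain ⟨hq, hp⟩ := qden_pnum_congr a k h
  rw [convergent, convergent, hq, hp]

theorem neg_one_pow_mul_mobius_sub_mobius_nonneg (k : ℕ) {s t : ℝ} (hs : 0 ≤ s)
    (hst : s ≤ t) :
    0 ≤ (-1) ^ k * (mobius a k t - mobius a k s) := by
  have h₀ := qden_cast_pos a k
  have h₁ := qden_cast_pos a (k+1)
  have hD : ∀ u : ℝ, 0 ≤ u → 0 < u * qden a (k+1) + qden a k := fun u hu => by positivity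
  have hdet := pnum_mul_qden_sub_qden_mul_pnum a k
  have hsq : ((-1 : ℝ) ^ k) ^ 2 = 1 := by rw [← pow_mul, mul_comm, pow_mul]; norm_num
  have : (-1) ^ k * (mobius a k t - mobius a k s) =
      (t - s) / ((t * qden a (k+1) + qden a k) * (s * qden a (k+1) + qden a k)) := by
    rw [mobius, mobius, div_sub_div _ _ (hD t (hs.trans hst)).ne' (hD s hs).ne', ← mul_div_assoc]
    congr 1
    linear_combination (-1) ^ k * (t - s) * hdet + (t - s) * hsq
  rw [this]
  exact div_nonneg (by linarith) (mul_pos (hD t (hs.trans hst)) (hD s hs)).le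

theorem neg_one_pow_mul_convergent_sub_mobius_one (k : ℕ) :
    (-1) ^ k * (convergent a (k+1) - mobius a k 1) =
      1 / (qden a (k+1) * (qden a (k+1) + qden a k)) := by
  have h₀ := qden_cast_pos a k
  have h₁ := qden_cast_pos a (k+1)
  have hdet := pnum_mul_qden_sub_qden_mul_pnum a k
  have hsq : ((-1 : ℝ) ^ k) ^ 2 = 1 := by rw [← pow_mul, mul_comm, pow_mul]; norm_num
  rw [convergent, mobius, one_mul, one_mul, div_sub_div _ _ h₁.ne' (by positivity),
    ← mul_div_assoc]
  congr 1
  linear_combination (-1) ^ k * hdet + hsq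

theorem one_div_two_mul_le_neg_one_pow_mul_cfVal_sub_mobius_one (k : ℕ) :
    1 / (2 * (qden a (k+2) * qden a (k+3))) ≤ (-1) ^ k * (cfVal a - mobius a k 1) := by
  have h₀ := one_div_two_mul_le_neg_one_pow_mul_cfVal_sub_convergent a (k+2)
  have h₁ := neg_one_pow_mul_mobius_sub_mobius_nonneg a k zero_le_one
    (show (1 : ℝ) ≤ a (k+1) by exact_mod_cast (a (k+1)).pos)
  rw [mobius_partialQuotient_eq_convergent] at h₁
  have : (-1) ^ k * (cfVal a - mobius a k 1) =
      (-1) ^ (k+2) * (cfVal a - convergent a (k+2)) +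
        (-1) ^ k * (convergent a (k+2) - mobius a k 1) := by ring
  linarith

theorem cfVal_between_mobius_one_convergent_succ (k : ℕ) :
    0 < (-1) ^ k * (cfVal a - mobius a k 1) ∧ 0 < (-1) ^ k * (convergent a (k+1) - cfVal a) := by
  have h₀ := one_div_two_mul_le_neg_one_pow_mul_cfVal_sub_mobius_one a k
  have h₁ := one_div_two_mul_le_neg_one_pow_mul_cfVal_sub_convergent a (k+1)
  have := qden_cast_pos a (k+1)
  have := qden_cast_pos a (k+2)
  have := qden_cast_pos a (k+3)
  rw [pow_succ] at h₁
  constructor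
  · exact lt_of_lt_of_le (by positivity) h₀
  · linarith [show (0 : ℝ) < 1 / (2 * (qden a (k+1) * qden a (k+2))) by positivity]

theorem cfVal_between_mobius_partialQuotient (k : ℕ) :
    1 / (2 * (qden a (k+3) * qden a (k+4))) ≤ (-1) ^ k * (cfVal a - mobius a k (a (k+1))) ∧
      1 / (2 * (qden a (k+3) * qden a (k+4))) ≤
        (-1) ^ k * (mobius a k (a (k+1) + 1) - cfVal a) := by
  have h₀ := one_div_two_mul_le_neg_one_pow_mul_cfVal_sub_convergent a (k+2)
  have h₁ := one_div_two_mul_le_neg_one_pow_mul_cfVal_sub_mobius_one a (k+1)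
  rw [mobius_partialQuotient_eq_convergent, ← mobius_succ_one]
  have hq : 1 / (2 * ((qden a (k+3) : ℝ) * qden a (k+4))) ≤
      1 / (2 * (qden a (k+2) * qden a (k+3))) := by
    have := qden_cast_pos a (k+2)
    have := qden_cast_pos a (k+3)
    have : (qden a (k+2) : ℝ) ≤ qden a (k+4) := by exact_mod_cast qden_mono a (by omega)
    gcongr 1 / (2 * ?_)
    nlinarith
  constructor
  · rw [pow_add] at h₀; linarith
  · rw [pow_succ] at h₁; linarith

variable {a} {b : ℕ → ℕ+}

theorem abs_cfVal_sub_cfVal_le {k : ℕ} (h : ∀ j < k+1, b j = a j) :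
    |cfVal a - cfVal b| ≤ 1 / (qden a (k+1) : ℝ) ^ 2 := by
  obtain ⟨hxL, hxR⟩ := cfVal_between_mobius_one_convergent_succ a k
  obtain ⟨hyL, hyR⟩ := cfVal_between_mobius_one_convergent_succ b k
  rw [mobius_congr a h] at hyL
  rw [convergent_congr a h] at hyR
  have hlen := neg_one_pow_mul_convergent_sub_mobius_one a k
  have hle : 1 / ((qden a (k+1) : ℝ) * (qden a (k+1) + qden a k)) ≤
      1 / (qden a (k+1) : ℝ) ^ 2 := by
    have := qden_cast_pos a k
    have := qden_cast_pos a (k+1)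
    gcongr 1 / ?_
    nlinarith
  rcases neg_one_pow_eq_or ℝ k with hε | hε <;> rw [hε] at hxL hxR hyL hyR hlen <;>
    rw [abs_le] <;> constructor <;> linarith

theorem one_div_two_mul_le_abs_cfVal_sub_cfVal {k : ℕ} (h : ∀ j < k+1, b j = a j)
    (hk : b (k+1) ≠ a (k+1)) :
    1 / (2 * (qden a (k+3) * qden a (k+4))) ≤ |cfVal a - cfVal b| := by
  obtain ⟨hxL, hxR⟩ := cfVal_between_mobius_partialQuotient a k
  obtain ⟨hyL, hyR⟩ := cfVal_between_mobius_partialQuotient b k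
  rw [mobius_congr a h] at hyL hyR
  have := qden_cast_pos b (k+3)
  have := qden_cast_pos b (k+4)
  have hδ : (0 : ℝ) < 1 / (2 * (qden b (k+3) * qden b (k+4))) := by positivity
  -- The rank-`(k+2)` intervals of `cfVal a` and `cfVal b` are the images under the monotone map
  -- `mobius a k` of `[a (k+1), a (k+1) + 1]` and `[b (k+1), b (k+1) + 1]`.
  rcases lt_or_gt_of_ne hk with hlt | hgt
  · have hmono := neg_one_pow_mul_mobius_sub_mobius_nonneg a k (s := b (k+1) + 1)
      (t := a (k+1)) (by positivity) (by exact_mod_cast hlt)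
    have := neg_one_pow_mul_le_abs k (cfVal a - cfVal b)
    linarith
  · have hmono := neg_one_pow_mul_mobius_sub_mobius_nonneg a k (s := a (k+1) + 1)
      (t := b (k+1)) (by positivity) (by exact_mod_cast hgt)
    have := neg_one_pow_mul_le_abs k (cfVal b - cfVal a)
    rw [abs_sub_comm] at this
    linarith

theorem cfVal_lt_cfVal_of_head_lt (h : a 0 < b 0) : cfVal b < cfVal a := by
  have hx := (cfVal_between_mobius_one_convergent_succ a 0).1
  have hy := (cfVal_between_mobius_one_convergent_succ b 0).2
  simp only [pow_zero, one_mul, mobius, convergent, pnum, qden, Nat.cast_one,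
    Nat.cast_zero, add_zero, mul_one] at hx hy
  have : (1 : ℝ) / b 0 ≤ 1 / (a 0 + 1) := by
    gcongr
    exact_mod_cast h
  linarith

end

theorem cfVal_injective : Function.Injective cfVal := by
  classical
  intro a b hab
  by_contra hne
  have hex : ∃ k, b k ≠ a k := by
    by_contra! h
    exact hne (funext h).symm
  obtain ⟨k, hk, hlt⟩ : ∃ k, b k ≠ a k ∧ ∀ j < k, b j = a j :=
    ⟨Nat.find hex, Nat.find_spec hex, fun j hj => not_not.1 (Nat.find_min hex hj)⟩
  cases k with
  | zero =>
    rcases lt_or_gt_of_ne hk with h | h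
    exacts [(cfVal_lt_cfVal_of_head_lt h).ne hab, (cfVal_lt_cfVal_of_head_lt h).ne' hab]
  | succ k =>
    have hsep := one_div_two_mul_le_abs_cfVal_sub_cfVal hlt hk
    rw [hab, sub_self, abs_zero] at hsep
    have := qden_cast_pos a (k+3)
    have := qden_cast_pos a (k+4)
    exact hsep.not_gt (by positivity)

theorem coeff_cfVal (a : ℕ → ℕ+) : coeff (cfVal a) = a := by
  have h : ∃ b, cfVal b = cfVal a := ⟨a, rfl⟩
  rw [coeff, dif_pos h]
  exact cfVal_injective h.choose_spec

theorem cantorF1_cfVal (a : ℕ → ℕ+) : cantorF1 (cfVal a) = cfVal fun j => a (2*j) := by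
  rw [cantorF1, coeff_cfVal]

theorem exists_of_mem_fundInt_diff {a : ℕ → ℕ+} {n : ℕ} {y : ℝ}
    (hy : y ∈ fundInt a n \ fundInt a (n+1)) :
    ∃ b : ℕ → ℕ+, cfVal b = y ∧ (∀ j < n, b j = a j) ∧ b n ≠ a n := by
  obtain ⟨⟨b, rfl, hb⟩, hy⟩ := hy
  refine ⟨b, rfl, hb, fun hn => hy ⟨b, rfl, fun j hj => ?_⟩⟩
  rcases (Nat.lt_succ_iff_lt_or_eq.1 hj) with hj | rfl
  exacts [hb j hj, hn]

theorem log_one_div_sq (P : ℝ) : Real.log (1 / P ^ 2) = -2 * Real.log P := by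
  rw [one_div, Real.log_inv, Real.log_pow]
  push_cast
  ring

theorem log_abs_cfVal_sub_cfVal_bounds {a b : ℕ → ℕ+} {n : ℕ} (hn : n ≠ 0)
    (h : ∀ j < n, b j = a j) (hbn : b n ≠ a n) :
    -2 * ∑ j ∈ range (n+3), Real.log ((a j : ℝ) + 1) ≤ Real.log |cfVal a - cfVal b| ∧
      Real.log |cfVal a - cfVal b| ≤ -2 * ∑ j ∈ range n, Real.log (a j) := by
  obtain ⟨k, rfl⟩ := Nat.exists_eq_succ_of_ne_zero hn
  have hQ : (0 : ℝ) < ∏ j ∈ range (k+1), (a j : ℝ) := prod_pos fun j _ => by positivity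
  have hP : (0 : ℝ) < ∏ j ∈ range (k+4), ((a j : ℝ) + 1) := prod_pos fun j _ => by positivity
  have hlower : 1 / (∏ j ∈ range (k+4), ((a j : ℝ) + 1)) ^ 2 ≤ |cfVal a - cfVal b| := by
    refine le_trans ?_ (one_div_two_mul_le_abs_cfVal_sub_cfVal h hbn)
    have := qden_cast_pos a (k+3)
    have := qden_cast_pos a (k+4)
    gcongr 1 / ?_
    exact_mod_cast two_mul_qden_mul_qden_succ_le a (k+3)
  have hupper : |cfVal a - cfVal b| ≤ 1 / (∏ j ∈ range (k+1), (a j : ℝ)) ^ 2 := by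
    refine (abs_cfVal_sub_cfVal_le h).trans ?_
    gcongr 1 / ?_ ^ 2
    exact_mod_cast prod_le_qden a (k+1)
  have hpos : 0 < |cfVal a - cfVal b| := lt_of_lt_of_le (by positivity) hlower
  rw [← Real.log_prod fun j _ => by positivity, ← Real.log_prod fun j _ => by positivity,
    ← log_one_div_sq, ← log_one_div_sq]
  exact ⟨Real.log_le_log (by positivity) hlower, Real.log_le_log hpos hupper⟩

theorem div_add_le_div_of_bounds {LA LB SA TB C : ℝ} (hSA : 0 ≤ SA) (hC : 0 ≤ C)
    (hA : LA ≤ -2 * SA) (hB : -2 * TB ≤ LB) (hLB : LB < 0) :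
    SA / (TB + C) ≤ LA / LB := by
  have hTB : 0 < TB := by linarith
  calc SA / (TB + C) ≤ SA / TB := div_le_div_of_nonneg_left hSA hTB (by linarith)
    _ = (2 * SA) / (2 * TB) := (mul_div_mul_left SA TB two_ne_zero).symm
    _ ≤ (-LA) / (-LB) := div_le_div₀ (by linarith) (by linarith) (by linarith) (by linarith)
    _ = LA / LB := neg_div_neg_eq LA LB

theorem div_le_add_div_of_bounds {LA LB SB TA C : ℝ} (hSB : 0 < SB) (hC : 0 ≤ C)
    (hA : -2 * TA ≤ LA) (hLA : LA ≤ 0) (hB : LB ≤ -2 * SB) :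
    LA / LB ≤ (TA + C) / SB := by
  calc LA / LB = (-LA) / (-LB) := (neg_div_neg_eq LA LB).symm
    _ ≤ (2 * TA) / (2 * SB) :=
      div_le_div₀ (by linarith) (by linarith) (by linarith) (by linarith)
    _ = TA / SB := mul_div_mul_left TA SB two_ne_zero
    _ ≤ (TA + C) / SB := by gcongr; linarith

theorem log_two_div_two_add_log_max_nonneg {u : ℝ} (hu : 0 ≤ u) (v : ℝ) :
    0 ≤ Real.log 2 / 2 + Real.log (max ((u + 2) / (u + 1)) ((v + 2) / (v + 1))) := by
  have h₂ : 0 < Real.log 2 := Real.log_pos one_lt_two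
  have h₁ : 0 ≤ Real.log ((u + 2) / (u + 1)) :=
    Real.log_nonneg ((one_le_div (by positivity)).2 (by linarith))
  have := Real.log_le_log (by positivity) (le_max_left ((u + 2) / (u + 1)) ((v + 2) / (v + 1)))
  linarith

/-- Partial quotients are 0-indexed (`a j = a_{j+1}`), and `⌈n/2⌉ = n/2` as `n` is even: the
coefficients `a_{n+2}`, `a_{n+3}`, `a_{2⌈n/2⌉+3}`, `a_{2⌈n/2⌉+5}` of `C₁(n)`, `C₂(n)` are
`a (n+1)`, `a (n+2)`, `a (n+2)`, `a (n+4)`. -/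
theorem holder_ratio_bounds_cantorF1_general (a : ℕ → ℕ+) (x : ℝ)
    (hxa : cfVal a = x) (n : ℕ) (hn : 2 ≤ n) (hne : Even n)
    (hpos : 0 < ∑ j ∈ Finset.range n, Real.log (a j)) (y : ℝ)
    (hy : y ∈ fundInt a n \ fundInt a (n+1)) :
    ((1 / (n:ℝ)) * ∑ j ∈ Finset.range (n / 2), Real.log (a (2*j))) /
        ((1 / (n:ℝ)) * ∑ j ∈ Finset.range (n+3), Real.log ((a j : ℝ) + 1) +
          (Real.log 2 / 2 +
            Real.log (max (((a (n+1) : ℝ) + 2) / ((a (n+1) : ℝ) + 1))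
              (((a (n+2) : ℝ) + 2) / ((a (n+2) : ℝ) + 1)))) / (n:ℝ)) ≤
      Real.log |cantorF1 x - cantorF1 y| / Real.log |x - y| ∧
    Real.log |cantorF1 x - cantorF1 y| / Real.log |x - y| ≤
      ((1 / (n:ℝ)) * ∑ j ∈ Finset.range (n / 2 + 3), Real.log ((a (2*j) : ℝ) + 1) +
          (Real.log 2 / 2 +
            Real.log (max (((a (n+2) : ℝ) + 2) / ((a (n+2) : ℝ) + 1))
              (((a (n+4) : ℝ) + 2) / ((a (n+4) : ℝ) + 1)))) / (2*(n:ℝ))) /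
        ((1 / (n:ℝ)) * ∑ j ∈ Finset.range n, Real.log (a j)) := by
  obtain ⟨b, rfl, hab, hbn⟩ := exists_of_mem_fundInt_diff hy
  subst hxa
  have hhalf := Nat.two_mul_div_two_of_even hne
  obtain ⟨hXl, hXu⟩ := log_abs_cfVal_sub_cfVal_bounds (by omega) hab hbn
  obtain ⟨hFl, hFu⟩ := log_abs_cfVal_sub_cfVal_bounds (a := fun j => a (2*j))
    (b := fun j => b (2*j)) (n := n / 2) (by omega) (fun j hj => hab _ (by omega))
    (by simpa only [hhalf] using hbn)
  rw [cantorF1_cfVal, cantorF1_cfVal]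
  have hSA : 0 ≤ ∑ j ∈ range (n / 2), Real.log (a (2*j)) :=
    sum_nonneg fun j _ => Real.log_nonneg (by exact_mod_cast (a (2*j)).pos)
  have hn₀ : (n : ℝ) ≠ 0 := by positivity
  have hscale₁ : ∀ S T C : ℝ, 1 / (n : ℝ) * S / (1 / n * T + C / n) = S / (T + C) :=
    fun _ _ _ => by field_simp
  have hscale₂ : ∀ S T C : ℝ, (1 / (n : ℝ) * T + C / (2 * n)) / (1 / n * S) = (T + C / 2) / S :=
    fun _ _ _ => by field_simp
  rw [hscale₁, hscale₂]
  have hC₁ := log_two_div_two_add_log_max_nonneg (u := a (n+1)) (by positivity) (a (n+2))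
  have hC₂ := log_two_div_two_add_log_max_nonneg (u := a (n+2)) (by positivity) (a (n+4))
  exact ⟨div_add_le_div_of_bounds hSA hC₁ hFu hXl (by linarith),
    div_le_add_div_of_bounds hpos (by linarith) hFl (by linarith) hXu⟩

/-- Hölder-type two-sided bound for `f₁` (Theorem 10 of the paper): for `x ∈ I` with
partial quotients `a` (0-indexed: `a j = a_{j+1}`), `n ≥ 2` even with
`∑_{j=1}^n log a_j > 0`, and `y ∈ I_n(x) \\ I_{n+1}(x)`,
the ratio `log|f₁(x)−f₁(y)| / log|x−y|` is bounded below and above as stated.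
Since `n` is even, `⌈n/2⌉ = n/2`, `2⌈n/2⌉+3 = n+3` and `2⌈n/2⌉+5 = n+5`;
1-indexed coefficients `a_{n+2}, a_{n+3}, a_{n+5}` are `a (n+1), a (n+2), a (n+4)`. -/
theorem holder_ratio_bounds_cantorF1 (a : ℕ → ℕ+) (x : ℝ) (hx : x ∈ Iirr)
    (hxa : cfVal a = x) (n : ℕ) (hn : 2 ≤ n) (hne : Even n)
    (hpos : 0 < ∑ j ∈ Finset.range n, Real.log (a j)) (y : ℝ)
    (hy : y ∈ fundInt a n \ fundInt a (n+1)) :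
    ((1 / (n:ℝ)) * ∑ j ∈ Finset.range (n / 2), Real.log (a (2*j))) /
        ((1 / (n:ℝ)) * ∑ j ∈ Finset.range (n+3), Real.log ((a j : ℝ) + 1) +
          (Real.log 2 / 2 +
            Real.log (max (((a (n+1) : ℝ) + 2) / ((a (n+1) : ℝ) + 1))
              (((a (n+2) : ℝ) + 2) / ((a (n+2) : ℝ) + 1)))) / (n:ℝ)) ≤
      Real.log |cantorF1 x - cantorF1 y| / Real.log |x - y| ∧
    Real.log |cantorF1 x - cantorF1 y| / Real.log |x - y| ≤
      ((1 / (n:ℝ)) * ∑ j ∈ Finset.range (n / 2 + 3), Real.log ((a (2*j) : ℝ) + 1) +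
          (Real.log 2 / 2 +
            Real.log (max (((a (n+2) : ℝ) + 2) / ((a (n+2) : ℝ) + 1))
              (((a (n+4) : ℝ) + 2) / ((a (n+4) : ℝ) + 1)))) / (2*(n:ℝ))) /
        ((1 / (n:ℝ)) * ∑ j ∈ Finset.range n, Real.log (a j)) :=
  holder_ratio_bounds_cantorF1_general a x hxa n hn hne hpos y hy
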